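/- The double cross product A ⋈ H is a bialgebra: with the tensor-product coalgebra structure on A ⊗ H, for all u, v ∈ A ⊗ H one has Δ_{A⊗H}(m_D(u ⊗ v)) = Σ m_D(u₁ ⊗ v₁) ⊗ m_D(u₂ ⊗ v₂), ε_{A⊗H}(m_D(u ⊗ v)) = ε_{A⊗H}(u)·ε_{A⊗H}(v), and Δ_{A⊗H}(1_A ⊗ 1_H) = (1_A ⊗ 1_H) ⊗ (1_A ⊗ 1_H). -/

import Mathlib

/-! Since `ξ (a ⊗ h) = j_A a * j_H h` and the multiplication of the bialgebra `X` is a coalgebra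
map `X ⊗ X → X`, `ξ` is a composite of coalgebra maps, hence a coalgebra isomorphism; then
`ζ = ξ⁻¹ ∘ μ ∘ (j_H ⊗ j_A)` is a coalgebra map too. A map `f` into `A ⊗ H` that commutes with the
comultiplications is recovered from its components `(id ⊗ ε) ∘ f` and `(ε ⊗ id) ∘ f`, so
`h ⊗ a ↦ Σ α(h₁ ⊗ a₁) ⊗ β(h₂ ⊗ a₂)` is `ζ` itself. Then `m_D(u ⊗ v) = ξ⁻¹(ξ u * ξ v)` is the
multiplication of `X` transported along the coalgebra isomorphism `ξ`, hence a coalgebra map. -/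

open TensorProduct

noncomputable section

universe u

variable {k A H X : Type u} [Field k]
  [Ring A] [Ring H] [Ring X]
  [Bialgebra k A] [Bialgebra k H] [Bialgebra k X]

/-- ζ : H ⊗ A → A ⊗ H, ζ(h ⊗ a) = ξ⁻¹(j_H(h) · j_A(a)). -/
def zetaF (jA : A →ₐc[k] X) (jH : H →ₐc[k] X) (ξ : (A ⊗[k] H) ≃ₗ[k] X) :
    H ⊗[k] A →ₗ[k] A ⊗[k] H :=
  ξ.symm.toLinearMap ∘ₗ LinearMap.mul' k X ∘ₗ
    TensorProduct.map (jH : H →ₗ[k] X) (jA : A →ₗ[k] X)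

/-- α := (id_A ⊗ ε_H) ∘ ζ. -/
def alphaF (jA : A →ₐc[k] X) (jH : H →ₐc[k] X) (ξ : (A ⊗[k] H) ≃ₗ[k] X) :
    H ⊗[k] A →ₗ[k] A :=
  (TensorProduct.rid k A).toLinearMap ∘ₗ
    TensorProduct.map LinearMap.id Coalgebra.counit ∘ₗ zetaF jA jH ξ

/-- β := (ε_A ⊗ id_H) ∘ ζ. -/
def betaF (jA : A →ₐc[k] X) (jH : H →ₐc[k] X) (ξ : (A ⊗[k] H) ≃ₗ[k] X) :
    H ⊗[k] A →ₗ[k] H :=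
  (TensorProduct.lid k H).toLinearMap ∘ₗ
    TensorProduct.map Coalgebra.counit LinearMap.id ∘ₗ zetaF jA jH ξ

/-- The map H ⊗ A → A ⊗ H, h ⊗ a ↦ Σ α(h₁ ⊗ a₁) ⊗ β(h₂ ⊗ a₂). -/
def zetaAB (jA : A →ₐc[k] X) (jH : H →ₐc[k] X) (ξ : (A ⊗[k] H) ≃ₗ[k] X) :
    H ⊗[k] A →ₗ[k] A ⊗[k] H :=
  TensorProduct.map (alphaF jA jH ξ) (betaF jA jH ξ) ∘ₗ
    (Coalgebra.comul : H ⊗[k] A →ₗ[k] (H ⊗[k] A) ⊗[k] (H ⊗[k] A))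

/-- The double cross product multiplication m_D on A ⊗ H:
m_D((a ⊗ h) ⊗ (a' ⊗ h')) = Σ a·α(h₁ ⊗ a'₁) ⊗ β(h₂ ⊗ a'₂)·h'. -/
def mD (jA : A →ₐc[k] X) (jH : H →ₐc[k] X) (ξ : (A ⊗[k] H) ≃ₗ[k] X) :
    (A ⊗[k] H) ⊗[k] (A ⊗[k] H) →ₗ[k] A ⊗[k] H :=
  TensorProduct.map (LinearMap.mul' k A) LinearMap.id ∘ₗ
  (TensorProduct.assoc k A A H).symm.toLinearMap ∘ₗ
  TensorProduct.map LinearMap.id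
    (TensorProduct.map LinearMap.id (LinearMap.mul' k H) ∘ₗ
     (TensorProduct.assoc k A H H).toLinearMap ∘ₗ
     TensorProduct.map (zetaAB jA jH ξ) LinearMap.id ∘ₗ
     (TensorProduct.assoc k H A H).symm.toLinearMap) ∘ₗ
  (TensorProduct.assoc k A H (A ⊗[k] H)).toLinearMap

section TensorProductCoalgebra

open Coalgebra

variable {R C M N : Type*} [CommSemiring R]
  [AddCommMonoid C] [Module R C] [Coalgebra R C]
  [AddCommMonoid M] [Module R M] [Coalgebra R M]
  [AddCommMonoid N] [Module R N] [Coalgebra R N]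

theorem map_rid_lid_comp_comul :
    TensorProduct.map
        ((TensorProduct.rid R M).toLinearMap ∘ₗ TensorProduct.map LinearMap.id Coalgebra.counit)
        ((TensorProduct.lid R N).toLinearMap ∘ₗ TensorProduct.map Coalgebra.counit LinearMap.id) ∘ₗ
      Coalgebra.comul = LinearMap.id (R := R) (M := M ⊗[R] N) := by
  ext m n
  have hm : TensorProduct.rid R M (counit.lTensor M (comul m)) = m := by
    simp [lTensor_counit_comul]
  have hn : TensorProduct.lid R N (counit.rTensor N (comul n)) = n := by
    simp [rTensor_counit_comul]
  simp only [AlgebraTensorModule.curry_apply, curry_apply, LinearMap.coe_restrictScalars,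
    LinearMap.comp_apply, TensorProduct.comul_tmul, LinearMap.id_apply]
  conv_rhs => rw [← hm, ← hn]
  generalize comul (R := R) m = x, comul (R := R) n = y
  induction x using TensorProduct.induction_on with
  | zero => simp
  | add x₁ x₂ h₁ h₂ => simp only [add_tmul, map_add, h₁, h₂]
  | tmul m₁ m₂ =>
    induction y using TensorProduct.induction_on with
    | zero => simp
    | add y₁ y₂ h₁ h₂ => simp only [tmul_add, map_add, h₁, h₂]
    | tmul n₁ n₂ => simp [smul_tmul, smul_smul, mul_comm]

theorem map_rid_lid_comp_comul_of_map_comp_comul {f : C →ₗ[R] M ⊗[R] N}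
    (hf : TensorProduct.map f f ∘ₗ Coalgebra.comul = Coalgebra.comul ∘ₗ f) :
    TensorProduct.map
        ((TensorProduct.rid R M).toLinearMap ∘ₗ
          TensorProduct.map LinearMap.id Coalgebra.counit ∘ₗ f)
        ((TensorProduct.lid R N).toLinearMap ∘ₗ
          TensorProduct.map Coalgebra.counit LinearMap.id ∘ₗ f) ∘ₗ
      Coalgebra.comul = f := by
  rw [← LinearMap.comp_assoc f, ← LinearMap.comp_assoc f, TensorProduct.map_comp,
    LinearMap.comp_assoc, hf, ← LinearMap.comp_assoc,
    map_rid_lid_comp_comul, LinearMap.id_comp]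

end TensorProductCoalgebra

section DoubleCrossProduct

variable (jA : A →ₐc[k] X) (jH : H →ₐc[k] X) {ξ : (A ⊗[k] H) ≃ₗ[k] X}

theorem toLinearMap_eq_mul_comp_map (hξ : ∀ (a : A) (h : H), ξ (a ⊗ₜ[k] h) = jA a * jH h) :
    (ξ : A ⊗[k] H →ₗ[k] X) =
      ((Bialgebra.mulCoalgHom k X).comp
        (Coalgebra.TensorProduct.map (jA : A →ₗc[k] X) (jH : H →ₗc[k] X))).toLinearMap := by
  ext a h
  simp [hξ]

def xiCoalgEquiv (hξ : ∀ (a : A) (h : H), ξ (a ⊗ₜ[k] h) = jA a * jH h) :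
    A ⊗[k] H ≃ₗc[k] X :=
  { ξ with
    counit_comp := by
      rw [toLinearMap_eq_mul_comp_map jA jH hξ]
      exact CoalgHom.counit_comp _
    map_comp_comul := by
      rw [toLinearMap_eq_mul_comp_map jA jH hξ]
      exact CoalgHom.map_comp_comul _ }

def zetaCoalgHom (hξ : ∀ (a : A) (h : H), ξ (a ⊗ₜ[k] h) = jA a * jH h) :
    H ⊗[k] A →ₗc[k] A ⊗[k] H :=
  (xiCoalgEquiv jA jH hξ).symm.toCoalgHom.comp
    ((Bialgebra.mulCoalgHom k X).comp
      (Coalgebra.TensorProduct.map (jH : H →ₗc[k] X) (jA : A →ₗc[k] X)))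

theorem toLinearMap_zetaCoalgHom (hξ : ∀ (a : A) (h : H), ξ (a ⊗ₜ[k] h) = jA a * jH h) :
    (zetaCoalgHom jA jH hξ).toLinearMap = zetaF jA jH ξ :=
  rfl

theorem zetaAB_eq_zetaF (hξ : ∀ (a : A) (h : H), ξ (a ⊗ₜ[k] h) = jA a * jH h) :
    zetaAB jA jH ξ = zetaF jA jH ξ := by
  rw [← toLinearMap_zetaCoalgHom jA jH hξ]
  exact map_rid_lid_comp_comul_of_map_comp_comul (zetaCoalgHom jA jH hξ).map_comp_comul

theorem mD_eq_symm_comp_mul'_comp_map (hξ : ∀ (a : A) (h : H), ξ (a ⊗ₜ[k] h) = jA a * jH h) :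
    mD jA jH ξ = ξ.symm.toLinearMap ∘ₗ LinearMap.mul' k X ∘ₗ TensorProduct.map ξ ξ := by
  ext a h a' h'
  simp only [mD, zetaAB_eq_zetaF jA jH hξ, zetaF, AlgebraTensorModule.curry_apply, curry_apply,
    LinearMap.restrictScalars_self, LinearMap.coe_comp, LinearEquiv.coe_coe, LinearMap.coe_coe,
    Function.comp_apply, assoc_tmul, assoc_symm_tmul, map_tmul, LinearMap.id_coe, id_eq,
    LinearMap.mul'_apply, hξ]
  obtain ⟨t, ht⟩ : ∃ t, ξ t = jH h * jA a' := ⟨_, ξ.apply_symm_apply _⟩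
  rw [LinearEquiv.eq_symm_apply, mul_assoc, ← mul_assoc (jH h), ← ht, ξ.symm_apply_apply]
  clear ht
  -- under `ξ`, left multiplication in `A` and right multiplication in `H` are those of `X`
  induction t using TensorProduct.induction_on with
  | zero => simp
  | add t₁ t₂ h₁ h₂ => simp [add_tmul, tmul_add, h₁, h₂, mul_add, add_mul]
  | tmul b g => simp [hξ, mul_assoc]

def mDCoalgHom (hξ : ∀ (a : A) (h : H), ξ (a ⊗ₜ[k] h) = jA a * jH h) :
    (A ⊗[k] H) ⊗[k] (A ⊗[k] H) →ₗc[k] A ⊗[k] H :=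
  (xiCoalgEquiv jA jH hξ).symm.toCoalgHom.comp
    ((Bialgebra.mulCoalgHom k X).comp
      (Coalgebra.TensorProduct.map (xiCoalgEquiv jA jH hξ).toCoalgHom
        (xiCoalgEquiv jA jH hξ).toCoalgHom))

theorem toLinearMap_mDCoalgHom (hξ : ∀ (a : A) (h : H), ξ (a ⊗ₜ[k] h) = jA a * jH h) :
    (mDCoalgHom jA jH hξ).toLinearMap = mD jA jH ξ := by
  rw [mD_eq_symm_comp_mul'_comp_map jA jH hξ]
  rfl

end DoubleCrossProduct

/-- the double cross product A ⋈ H is a bialgebra: with the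
tensor-product coalgebra structure on A ⊗ H, Δ and ε are multiplicative with
respect to m_D, and Δ(1 ⊗ 1) = (1 ⊗ 1) ⊗ (1 ⊗ 1). -/
theorem doubleCrossProduct_bialgebra (jA : A →ₐc[k] X) (jH : H →ₐc[k] X)
    (ξ : (A ⊗[k] H) ≃ₗ[k] X)
    (hξ : ∀ (a : A) (h : H), ξ (a ⊗ₜ[k] h) = jA a * jH h) :
    (∀ u v : A ⊗[k] H,
      Coalgebra.comul (R := k) (mD jA jH ξ (u ⊗ₜ[k] v))
        = TensorProduct.map (mD jA jH ξ) (mD jA jH ξ)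
            (Coalgebra.comul (R := k) (u ⊗ₜ[k] v)) ∧
      Coalgebra.counit (R := k) (mD jA jH ξ (u ⊗ₜ[k] v))
        = Coalgebra.counit (R := k) u * Coalgebra.counit (R := k) v) ∧
    Coalgebra.comul (R := k) ((1 : A) ⊗ₜ[k] (1 : H))
      = ((1 : A) ⊗ₜ[k] (1 : H)) ⊗ₜ[k] ((1 : A) ⊗ₜ[k] (1 : H)) := by
  rw [← toLinearMap_mDCoalgHom jA jH hξ]
  refine ⟨fun u v => ⟨?_, ?_⟩, ?_⟩
  · exact (CoalgHomClass.map_comp_comul_apply (mDCoalgHom jA jH hξ) (u ⊗ₜ v)).symm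
  · exact (CoalgHomClass.counit_comp_apply (mDCoalgHom jA jH hξ) (u ⊗ₜ v)).trans (mul_comm _ _)
  · simp [Algebra.TensorProduct.one_def]
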